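/- (Theorem 4, finite temperature, via Choi matrices.) Let Φ and Ω be linear maps on d×d complex matrices whose normalized Choi matrices J(Φ) and J(Ω) are density matrices on ℂ^{d²} (i.e., both maps are completely positive and trace preserving). Let Z be a d²×d² positive semidefinite matrix with Re Tr[Z · J(Ω)] ≤ 1 (Z is a channel-robustness witness feasible for the free channel Ω), and suppose R := Re Tr[Z · J(Φ)] − 1 > 0. Fix β > 0 and λ > 0 with λ·β·R ≥ S(J(Φ)), set H = λ·Z, and let τ = τ_H^β be the thermal state on ℂ^{d²}. Then (λ + β⁻¹·S(τ)) · (F_H(J(Φ)) − F_H(τ)) ≥ (λ·(1+R) + β⁻¹·(S(τ) − S(J(Φ)))) · (F_H(J(Ω)) − F_H(τ)). (The work cost of preparing the Choi state of the free channel relative to that of the resourceful channel is at most (1 + λ⁻¹β⁻¹S(τ))/(1 + R + λ⁻¹β⁻¹(S(τ) − S(J(Φ))))). -/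

import Mathlib

open Matrix ComplexOrder Kronecker

/-- A density matrix: positive semidefinite with unit trace. -/
def IsDensityMatrix {n : Type*} [Fintype n] (ρ : Matrix n n ℂ) : Prop :=
  ρ.PosSemidef ∧ ρ.trace = 1

/-- The von Neumann entropy `S(ρ) = -∑ᵢ λᵢ log λᵢ` of a Hermitian matrix,
computed from its eigenvalues (junk value `0` for non-Hermitian matrices). -/
noncomputable def vnEntropy {n : Type*} [Fintype n] [DecidableEq n]
    (ρ : Matrix n n ℂ) : ℝ :=
  if h : ρ.IsHermitian then ∑ i, -(h.eigenvalues i * Real.log (h.eigenvalues i)) else 0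

/-- The thermal (Gibbs) state `exp(-βH)/Tr[exp(-βH)]`. -/
noncomputable def thermalState {n : Type*} [Fintype n] [DecidableEq n]
    (β : ℝ) (H : Matrix n n ℂ) : Matrix n n ℂ :=
  ((NormedSpace.exp (-(β : ℂ) • H)).trace)⁻¹ • NormedSpace.exp (-(β : ℂ) • H)

/-- The free energy `F_H(ρ) = Re Tr[Hρ] - β⁻¹ S(ρ)`. -/
noncomputable def freeEnergy {n : Type*} [Fintype n] [DecidableEq n]
    (β : ℝ) (H ρ : Matrix n n ℂ) : ℝ :=
  ((H * ρ).trace).re - β⁻¹ * vnEntropy ρ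

/-- The normalized Choi matrix `J(Φ) = (1/d) ∑_{i,j} Φ(E_{ij}) ⊗ E_{ij}` of a
linear map `Φ` on `d × d` complex matrices. -/
noncomputable def choiMatrix {d : ℕ}
    (Φ : Matrix (Fin d) (Fin d) ℂ →ₗ[ℂ] Matrix (Fin d) (Fin d) ℂ) :
    Matrix (Fin d × Fin d) (Fin d × Fin d) ℂ :=
  (d : ℂ)⁻¹ • ∑ i : Fin d, ∑ j : Fin d,
    (Φ (Matrix.single i j 1)) ⊗ₖ (Matrix.single i j 1)

/-!
With `H = λZ` every free energy is affine in `Tr[Zρ]`: `F_H(ρ) = λ Tr[Zρ] - β⁻¹ S(ρ)`. Writing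
`M = λ + β⁻¹ S(τ)`, the right prefactor is `M + δ` with `δ = λ (Tr[Z J(Φ)] - 1) - β⁻¹ S(J(Φ)) ≥ 0`
(the entropy condition), and the difference of the two sides is exactly
`λ Tr[Zτ] · δ + (M + δ) · ε`, where `ε = λ (1 - Tr[Z J(Ω)]) + β⁻¹ S(J(Ω)) ≥ 0` by feasibility of
`Z` for `Ω`. Every factor is nonnegative because `Z ≥ 0` and `τ` is a state.
-/

namespace Matrix

lemma IsHermitian.ofReal_smul {n : Type*} {H : Matrix n n ℂ} (hH : H.IsHermitian) (r : ℝ) :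
    ((r : ℂ) • H).IsHermitian := by
  rw [Complex.coe_smul]
  exact hH.smul (.all r)

open scoped MatrixOrder Matrix.Norms.L2Operator in
lemma IsHermitian.posSemidef_exp {n : Type*} [Fintype n] [DecidableEq n] {H : Matrix n n ℂ}
    (hH : H.IsHermitian) : (NormedSpace.exp H).PosSemidef :=
  (IsSelfAdjoint.exp_nonneg hH).posSemidef

open scoped MatrixOrder Matrix.Norms.L2Operator in
lemma PosSemidef.re_trace_mul_nonneg {n : Type*} [Fintype n] {A B : Matrix n n ℂ}
    (hA : A.PosSemidef) (hB : B.PosSemidef) : 0 ≤ (A * B).trace.re := by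
  classical
  obtain ⟨C, rfl⟩ := CStarAlgebra.nonneg_iff_eq_star_mul_self.mp hB.nonneg
  rw [star_eq_conjTranspose, ← Matrix.mul_assoc, trace_mul_cycle]
  exact (Complex.nonneg_iff.mp (hA.mul_mul_conjTranspose_same C).trace_nonneg).1

end Matrix

lemma IsDensityMatrix.nonempty {n : Type*} [Fintype n] {ρ : Matrix n n ℂ}
    (hρ : IsDensityMatrix ρ) : Nonempty n := by
  by_contra h
  rw [not_nonempty_iff] at h
  simpa [Matrix.trace] using hρ.2

section

variable {n : Type*} [Fintype n] [DecidableEq n]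

lemma IsDensityMatrix.vnEntropy_nonneg {ρ : Matrix n n ℂ} (hρ : IsDensityMatrix ρ) :
    0 ≤ vnEntropy ρ := by
  have hH := hρ.1.isHermitian
  have hsum : ∑ i, hH.eigenvalues i = 1 := by
    have := hH.trace_eq_sum_eigenvalues
    rw [hρ.2] at this
    simpa using congrArg Complex.re this.symm
  rw [vnEntropy, dif_pos hH]
  refine Finset.sum_nonneg fun i _ => ?_
  have hle : hH.eigenvalues i ≤ 1 :=
    hsum ▸ Finset.single_le_sum (fun j _ => hρ.1.eigenvalues_nonneg j) (Finset.mem_univ i)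
  simpa [Real.negMulLog] using Real.negMulLog_nonneg (hρ.1.eigenvalues_nonneg i) hle

lemma isDensityMatrix_thermalState [Nonempty n] {H : Matrix n n ℂ} (hH : H.IsHermitian)
    (β : ℝ) : IsDensityMatrix (thermalState β H) := by
  have hE : (NormedSpace.exp (-(β : ℂ) • H)).PosSemidef := by
    simpa using (hH.ofReal_smul (-β)).posSemidef_exp
  have htr : (NormedSpace.exp (-(β : ℂ) • H)).trace ≠ 0 := by
    rw [Ne, hE.trace_eq_zero_iff]
    exact (Matrix.isUnit_exp _).ne_zero
  rw [IsDensityMatrix, thermalState]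
  refine ⟨hE.smul (inv_nonneg.mpr hE.trace_nonneg), ?_⟩
  rw [Matrix.trace_smul, smul_eq_mul, inv_mul_cancel₀ htr]

lemma freeEnergy_ofReal_smul (β r : ℝ) (Z ρ : Matrix n n ℂ) :
    freeEnergy β ((r : ℂ) • Z) ρ = r * (Z * ρ).trace.re - β⁻¹ * vnEntropy ρ := by
  simp [freeEnergy, Matrix.trace_smul]

theorem freeEnergy_gap_cross_mul_ge {ρ σ Z : Matrix n n ℂ} (hσ : IsDensityMatrix σ)
    (hZ : Z.PosSemidef) (hZσ : (Z * σ).trace.re ≤ 1) {β lam : ℝ} (hβ : 0 < β) (hlam : 0 < lam)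
    (hρ : vnEntropy ρ ≤ lam * β * ((Z * ρ).trace.re - 1)) :
    (lam + β⁻¹ * vnEntropy (thermalState β ((lam : ℂ) • Z))) *
        (freeEnergy β ((lam : ℂ) • Z) ρ -
          freeEnergy β ((lam : ℂ) • Z) (thermalState β ((lam : ℂ) • Z))) ≥
      (lam * (1 + ((Z * ρ).trace.re - 1)) +
          β⁻¹ * (vnEntropy (thermalState β ((lam : ℂ) • Z)) - vnEntropy ρ)) *
        (freeEnergy β ((lam : ℂ) • Z) σ -
          freeEnergy β ((lam : ℂ) • Z) (thermalState β ((lam : ℂ) • Z))) := by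
  have := hσ.nonempty
  set τ := thermalState β ((lam : ℂ) • Z)
  have hτ : IsDensityMatrix τ := isDensityMatrix_thermalState (hZ.isHermitian.ofReal_smul lam) β
  simp only [freeEnergy_ofReal_smul]
  set M := lam + β⁻¹ * vnEntropy τ
  have hM : 0 ≤ M := by have := hτ.vnEntropy_nonneg; positivity
  have hδ : 0 ≤ lam * ((Z * ρ).trace.re - 1) - β⁻¹ * vnEntropy ρ := by
    rw [sub_nonneg, inv_mul_le_iff₀ hβ]
    linarith
  have hε : 0 ≤ lam * (1 - (Z * σ).trace.re) + β⁻¹ * vnEntropy σ := by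
    have := hσ.vnEntropy_nonneg
    have : 0 ≤ 1 - (Z * σ).trace.re := by linarith
    positivity
  have ht : 0 ≤ lam * (Z * τ).trace.re := mul_nonneg hlam.le (hZ.re_trace_mul_nonneg hτ.1)
  linear_combination mul_nonneg ht hδ + mul_nonneg (add_nonneg hM hδ) hε

end

theorem channel_cost_finite_temperature_general {d : ℕ}
    (Φ Ω : Matrix (Fin d) (Fin d) ℂ →ₗ[ℂ] Matrix (Fin d) (Fin d) ℂ)
    (hΩ : IsDensityMatrix (choiMatrix Ω))
    (Z : Matrix (Fin d × Fin d) (Fin d × Fin d) ℂ) (hZ : Z.PosSemidef)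
    (hZΩ : ((Z * choiMatrix Ω).trace).re ≤ 1)
    (β lam : ℝ) (hβ : 0 < β) (hlam : 0 < lam)
    (hcond : vnEntropy (choiMatrix Φ) ≤ lam * β * (((Z * choiMatrix Φ).trace).re - 1)) :
    (lam + β⁻¹ * vnEntropy (thermalState β ((lam : ℂ) • Z))) *
        (freeEnergy β ((lam : ℂ) • Z) (choiMatrix Φ) -
          freeEnergy β ((lam : ℂ) • Z) (thermalState β ((lam : ℂ) • Z))) ≥
      (lam * (1 + (((Z * choiMatrix Φ).trace).re - 1)) +
          β⁻¹ * (vnEntropy (thermalState β ((lam : ℂ) • Z)) - vnEntropy (choiMatrix Φ))) *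
        (freeEnergy β ((lam : ℂ) • Z) (choiMatrix Ω) -
          freeEnergy β ((lam : ℂ) • Z) (thermalState β ((lam : ℂ) • Z))) :=
  freeEnergy_gap_cross_mul_ge hΩ hZ hZΩ hβ hlam hcond

/-- Theorem 4, finite temperature: the work cost of preparing the Choi state of
a free channel `Ω` relative to that of a resourceful channel `Φ` is bounded via
the channel robustness witness value `R = Re Tr[Z·J(Φ)] − 1`, stated in a
cross-multiplied form with Hamiltonian `H = λZ`. -/
theorem channel_cost_finite_temperature {d : ℕ}
    (Φ Ω : Matrix (Fin d) (Fin d) ℂ →ₗ[ℂ] Matrix (Fin d) (Fin d) ℂ)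
    (hΦ : IsDensityMatrix (choiMatrix Φ)) (hΩ : IsDensityMatrix (choiMatrix Ω))
    (Z : Matrix (Fin d × Fin d) (Fin d × Fin d) ℂ) (hZ : Z.PosSemidef)
    (hZΩ : ((Z * choiMatrix Ω).trace).re ≤ 1)
    (hR : 0 < ((Z * choiMatrix Φ).trace).re - 1)
    (β lam : ℝ) (hβ : 0 < β) (hlam : 0 < lam)
    (hcond : vnEntropy (choiMatrix Φ) ≤ lam * β * (((Z * choiMatrix Φ).trace).re - 1)) :
    (lam + β⁻¹ * vnEntropy (thermalState β ((lam : ℂ) • Z))) *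
        (freeEnergy β ((lam : ℂ) • Z) (choiMatrix Φ) -
          freeEnergy β ((lam : ℂ) • Z) (thermalState β ((lam : ℂ) • Z))) ≥
      (lam * (1 + (((Z * choiMatrix Φ).trace).re - 1)) +
          β⁻¹ * (vnEntropy (thermalState β ((lam : ℂ) • Z)) - vnEntropy (choiMatrix Φ))) *
        (freeEnergy β ((lam : ℂ) • Z) (choiMatrix Ω) -
          freeEnergy β ((lam : ℂ) • Z) (thermalState β ((lam : ℂ) • Z))) :=
  channel_cost_finite_temperature_general Φ Ω hΩ Z hZ hZΩ β lam hβ hlam hcond
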